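/- Let z ∈ ℂ satisfy Re(z) < 0, or Re(z) = 0 and Im(z) ≤ 0. Then the following chain of inequalities holds: |z + √(z²−1)| ≤ | |z| + √(|z|²−1) | ≤ |z − √(z²−1)| ≤ |z| + √(|z|²+1), where √(|z|²−1) denotes the principal complex square root of the real number |z|²−1, and √(|z|²+1) is the real square root. -/

import Mathlib

/-- The principal (arithmetic) complex square root: the square root with
positive real part, or with zero real part and nonnegative imaginary part. -/
noncomputable def csqrt (z : ℂ) : ℂ := z ^ (1 / 2 : ℂ)

lemma csqrt_eq_inv_two (z : ℂ) : csqrt z = z ^ (2⁻¹ : ℂ) := by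
  norm_num [csqrt]

lemma csqrt_sq (z : ℂ) : (csqrt z) ^ 2 = z := by
  have h : csqrt z = z ^ (((2 : ℕ) : ℂ)⁻¹) := by norm_num [csqrt]
  rw [h, Complex.cpow_nat_inv_pow _ two_ne_zero]

lemma csqrt_re_nonneg (z : ℂ) : 0 ≤ (csqrt z).re := by
  rw [csqrt_eq_inv_two, Complex.cpow_inv_two_re]
  positivity

lemma csqrt_im_nonneg {z : ℂ} (hz : 0 ≤ z.im) : 0 ≤ (csqrt z).im := by
  rw [csqrt_eq_inv_two, Complex.cpow_inv_two_im_eq_sqrt hz]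
  positivity

lemma csqrt_abs (z : ℂ) : ‖csqrt z‖ = Real.sqrt ‖z‖ := by
  have h : ‖csqrt z‖ ^ 2 = ‖z‖ := by
    rw [← norm_pow, csqrt_sq]
  rw [← h, Real.sqrt_sq (norm_nonneg _)]

lemma csqrt_ofReal_nonneg {r : ℝ} (hr : 0 ≤ r) :
    csqrt (r : ℂ) = ((Real.sqrt r : ℝ) : ℂ) := by
  rw [csqrt_eq_inv_two]
  have : ((2⁻¹ : ℝ) : ℂ) = (2⁻¹ : ℂ) := by norm_num
  rw [← this, ← Complex.ofReal_cpow hr]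
  norm_num [Real.sqrt_eq_rpow, Real.rpow_natCast]

set_option maxHeartbeats 1000000 in
/-- Lemma 4.1(ii): if `Re z < 0`, or `Re z = 0` and `Im z ≤ 0`, then
`|z + √(z²−1)| ≤ ||z| + √(|z|²−1)| ≤ |z − √(z²−1)| ≤ |z| + √(|z|²+1)`. -/
theorem stmt1 (z : ℂ) (hz : z.re < 0 ∨ (z.re = 0 ∧ z.im ≤ 0)) :
    ‖z + csqrt (z ^ 2 - 1)‖ ≤
      ‖(‖z‖ : ℂ) + csqrt (((‖z‖ : ℝ) ^ 2 - 1 : ℝ) : ℂ)‖ ∧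
    ‖(‖z‖ : ℂ) + csqrt (((‖z‖ : ℝ) ^ 2 - 1 : ℝ) : ℂ)‖ ≤
      ‖z - csqrt (z ^ 2 - 1)‖ ∧
    ‖z - csqrt (z ^ 2 - 1)‖ ≤
      ‖z‖ + Real.sqrt ((‖z‖) ^ 2 + 1) := by
  set w : ℂ := csqrt (z ^ 2 - 1) with hwdef
  set s : ℂ := csqrt (((‖z‖ : ℝ) ^ 2 - 1 : ℝ) : ℂ) with hsdef
  set r : ℝ := ‖z‖ with hrdef
  set a : ℝ := ‖z + w‖ with hadef
  set b : ℝ := ‖z - w‖ with hbdef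
  set B : ℝ := ‖(r : ℂ) + s‖ with hBdef
  have hr0 : 0 ≤ r := norm_nonneg _
  have ha0 : 0 ≤ a := norm_nonneg _
  have hb0 : 0 ≤ b := norm_nonneg _
  have hB0 : 0 ≤ B := norm_nonneg _
  have hw2 : w ^ 2 = z ^ 2 - 1 := csqrt_sq _
  have hx : z.re ≤ 0 := by rcases hz with h | ⟨h, _⟩ <;> linarith
  have hu : 0 ≤ w.re := csqrt_re_nonneg _
  have huv : w.re * w.im = z.re * z.im := by
    have h := congrArg Complex.im hw2
    simp [pow_two, Complex.mul_im] at h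
    linarith
  -- Re(z * conj w) ≤ 0
  have hkey : z.re * w.re + z.im * w.im ≤ 0 := by
    rcases eq_or_lt_of_le hu with hu' | hu'
    · -- w.re = 0
      have hxy : z.re * z.im = 0 := by rw [← huv, ← hu']; ring
      have him : (z ^ 2 - 1).im = 0 := by
        simp [pow_two, Complex.mul_im]
        linarith
      have hv : 0 ≤ w.im := csqrt_im_nonneg (le_of_eq him.symm)
      rcases hz with h | ⟨h, h'⟩
      · have hy : z.im = 0 := by
          rcases mul_eq_zero.1 hxy with h0 | h0
          · exact absurd h0 (ne_of_lt h)
          · exact h0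
        rw [← hu', hy]; norm_num
      · rw [h, ← hu']
        simpa using mul_nonpos_of_nonpos_of_nonneg h' hv
    · -- 0 < w.re
      have h1 : w.re * (z.re * w.re + z.im * w.im) = z.re * (w.re ^ 2 + z.im ^ 2) := by
        linear_combination z.im * huv
      have h2 : z.re * (w.re ^ 2 + z.im ^ 2) ≤ 0 :=
        mul_nonpos_of_nonpos_of_nonneg hx (by positivity)
      nlinarith
  have hab : a * b = 1 := by
    rw [hadef, hbdef, ← norm_mul]
    have h : (z + w) * (z - w) = 1 := by linear_combination (-1 : ℂ) * hw2
    rw [h, norm_one]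
  have hre : (z * (starRingEnd ℂ) w).re = z.re * w.re + z.im * w.im := by
    simp [Complex.mul_re]
  have hnz : Complex.normSq z = r ^ 2 := (Complex.sq_norm z).symm
  set m : ℝ := ‖w‖ with hmdef
  have hm0 : 0 ≤ m := norm_nonneg _
  have hnw : Complex.normSq w = m ^ 2 := (Complex.sq_norm w).symm
  have haa : a ^ 2 = r ^ 2 + m ^ 2 + 2 * (z.re * w.re + z.im * w.im) := by
    rw [hadef, Complex.sq_norm, Complex.normSq_add, hnz, hnw, hre]
  have hbb : b ^ 2 = r ^ 2 + m ^ 2 - 2 * (z.re * w.re + z.im * w.im) := by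
    rw [hbdef, Complex.sq_norm, Complex.normSq_sub, hnz, hnw, hre]
  have hSab : a ^ 2 + b ^ 2 = 2 * r ^ 2 + 2 * m ^ 2 := by rw [haa, hbb]; ring
  have h_ab : a ≤ b := by nlinarith
  have hb1 : 1 ≤ b := by nlinarith
  -- m² = |z²-1|
  have hm2 : m ^ 2 = ‖z ^ 2 - 1‖ := by
    rw [hmdef, hwdef, csqrt_abs, Real.sq_sqrt (norm_nonneg _)]
  have habs2 : ‖z ^ 2‖ = r ^ 2 := by rw [norm_pow, ← hrdef]
  have hm_lb : r ^ 2 - 1 ≤ m ^ 2 := by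
    have h := norm_add_le (z ^ 2 - 1) 1
    simp [habs2] at h
    rw [hm2]; linarith
  have hm_lb2 : 1 - r ^ 2 ≤ m ^ 2 := by
    have h := norm_add_le (1 - z ^ 2) (z ^ 2)
    simp [habs2] at h
    rw [hm2, ← norm_neg]
    simp only [neg_sub]
    linarith
  have hm_ub : m ^ 2 ≤ r ^ 2 + 1 := by
    have h := norm_sub_le (z ^ 2) 1
    simp [habs2] at h
    rw [hm2]; linarith
  -- facts about B
  have hBfacts : 1 ≤ B ∧ B ^ 4 + 1 ≤ B ^ 2 * (2 * r ^ 2 + 2 * m ^ 2) := by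
    rcases le_or_gt 1 (r ^ 2) with hr1 | hr1
    · -- s is real
      have hs : s = ((Real.sqrt (r ^ 2 - 1) : ℝ) : ℂ) :=
        csqrt_ofReal_nonneg (by linarith)
      set t : ℝ := Real.sqrt (r ^ 2 - 1) with htdef
      have ht0 : 0 ≤ t := Real.sqrt_nonneg _
      have ht2 : t ^ 2 = r ^ 2 - 1 := Real.sq_sqrt (by linarith)
      have hB : B = r + t := by
        rw [hBdef, hs, ← Complex.ofReal_add, Complex.norm_real, Real.norm_eq_abs,
          abs_of_nonneg (by linarith)]
      have hr1' : 1 ≤ r := by nlinarith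
      constructor
      · rw [hB]; linarith
      · rw [hB]
        have hid : (r + t) ^ 4 + 1 = (r + t) ^ 2 * (2 * r ^ 2 + 2 * t ^ 2) := by
          linear_combination (1 + r ^ 2 - t ^ 2) * ht2
        have h2 : (r + t) ^ 2 * (2 * r ^ 2 + 2 * t ^ 2) ≤
            (r + t) ^ 2 * (2 * r ^ 2 + 2 * m ^ 2) := by
          have ht : 2 * r ^ 2 + 2 * t ^ 2 ≤ 2 * r ^ 2 + 2 * m ^ 2 := by
            rw [ht2]; linarith
          exact mul_le_mul_of_nonneg_left ht (sq_nonneg _)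
        linarith
    · -- s is purely imaginary
      have hBsq : B ^ 2 = 1 := by
        have hq : (((r : ℝ) ^ 2 - 1 : ℝ) : ℂ).im = 0 := Complex.ofReal_im _
        have hqre : (((r : ℝ) ^ 2 - 1 : ℝ) : ℂ).re = r ^ 2 - 1 := Complex.ofReal_re _
        have hqabs : ‖(((r : ℝ) ^ 2 - 1 : ℝ) : ℂ)‖ = 1 - r ^ 2 := by
          rw [Complex.norm_real, Real.norm_eq_abs, abs_of_nonpos (by linarith)]; ring
        have hsre : s.re = 0 := by
          rw [hsdef, csqrt_eq_inv_two, Complex.cpow_inv_two_re, hqabs, hqre]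
          simp
        have hsim : |s.im| = Real.sqrt (1 - r ^ 2) := by
          rw [hsdef, csqrt_eq_inv_two, Complex.abs_cpow_inv_two_im, hqabs, hqre]
          congr 1; ring
        have hsim2 : s.im ^ 2 = 1 - r ^ 2 := by
          rw [← sq_abs, hsim, Real.sq_sqrt (by linarith)]
        rw [hBdef, Complex.sq_norm, Complex.normSq_apply]
        simp only [Complex.add_re, Complex.add_im, Complex.ofReal_re, Complex.ofReal_im, hsre]
        linear_combination hsim2
      have hB1 : B = 1 := by nlinarith
      rw [hB1]; constructor
      · linarith
      · nlinarith
  obtain ⟨hB1, hBS⟩ := hBfacts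
  have hkeyineq : B ^ 4 + 1 ≤ B ^ 2 * (a ^ 2 + b ^ 2) := by rw [hSab]; exact hBS
  have hab2 : a ^ 2 * b ^ 2 = 1 := by linear_combination (a * b + 1) * hab
  -- B ≤ b
  have hBb : B ≤ b := by
    by_contra hc
    push_neg at hc
    have h5' := mul_le_mul_of_nonneg_right hkeyineq (sq_nonneg b)
    have h6 : B ^ 2 * (a ^ 2 + b ^ 2) * b ^ 2 = B ^ 2 + B ^ 2 * b ^ 4 := by
      linear_combination B ^ 2 * hab2
    have h5 : (B ^ 4 + 1) * b ^ 2 ≤ B ^ 2 + B ^ 2 * b ^ 4 := by linarith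
    have hP1 : 0 < B ^ 2 - b ^ 2 := by
      nlinarith [mul_pos (sub_pos.2 hc) (show (0:ℝ) < B + b by linarith)]
    have h8 : 1 < B * b := by
      have hBpos : (0:ℝ) < B := by linarith
      calc (1:ℝ) < B := lt_of_le_of_lt hb1 hc
        _ = B * 1 := (mul_one B).symm
        _ ≤ B * b := mul_le_mul_of_nonneg_left hb1 (le_of_lt hBpos)
    have hP2 : 0 < B ^ 2 * b ^ 2 - 1 := by
      nlinarith [h8, sq_nonneg (B * b - 1)]
    nlinarith [mul_pos hP1 hP2, h5]
  refine ⟨?_, hBb, ?_⟩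
  · -- a ≤ B
    have hBpos : (0:ℝ) < B := lt_of_lt_of_le one_pos hB1
    have h1 : a * B ≤ 1 := by
      calc a * B ≤ a * b := mul_le_mul_of_nonneg_left hBb ha0
        _ = 1 := hab
    have h2 : a * B ≤ B * B := le_trans h1 (by nlinarith [hB1])
    exact le_of_mul_le_mul_right h2 hBpos
  · -- b ≤ r + √(r²+1)
    have htri : b ≤ r + m := by
      rw [hbdef]
      calc ‖z - w‖ ≤ ‖z‖ + ‖w‖ := norm_sub_le z w
        _ = r + m := rfl
    have hms : m ≤ Real.sqrt (r ^ 2 + 1) := by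
      rw [show m = Real.sqrt (m ^ 2) from (Real.sqrt_sq hm0).symm]
      exact Real.sqrt_le_sqrt hm_ub
    linarith
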